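/- Let Δ ≥ 2 and let 𝒮 be a collection (with repetition allowed) of copies of the star K_{1,Δ} on a common vertex set V with |V| = n = a(2Δ-1) + b, where a, b are nonnegative integers, a ≥ 1, 0 ≤ b ≤ 2Δ-2, and b(Δ-1) = k₁(2Δ-1) + k₂ with k₁, k₂ nonnegative integers and Δ < k₂ ≤ 2Δ-2. Let C ⊆ V be the set of vertices that are centers of at least one star of 𝒮. If 𝒮 is rainbow K_{1,Δ}-free and |𝒮| = a(Δ-1)² + k₁(Δ-1) + k₂ - Δ, then |C| = a(Δ-1) + k₁ + 1. -/

import Mathlib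

/-- A copy of the star K_{1,Δ} on the vertex set `V`: a center together with
a set of `Δ` leaves not containing the center. -/
structure StarGraph (V : Type) (Δ : ℕ) where
  center : V
  leaves : Finset V
  card_leaves : leaves.card = Δ
  center_not_mem : center ∉ leaves

/-- `x` and `y` are adjacent in the star `S`. -/
def StarGraph.Adj {V : Type} {Δ : ℕ} (S : StarGraph V Δ) (x y : V) : Prop :=
  (x = S.center ∧ y ∈ S.leaves) ∨ (y = S.center ∧ x ∈ S.leaves)

/-- The collection `S` has a rainbow star with center `u` and leaf set `L`:
there is an injective (on `L`) assignment of the leaves to members of the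
collection such that each edge from `u` to a leaf lies in the assigned star. -/
def IsRainbowStarAt {V : Type} {Δ t : ℕ} (S : Fin t → StarGraph V Δ) (u : V) (L : Finset V) : Prop :=
  u ∉ L ∧ ∃ g : V → Fin t, Set.InjOn g ↑L ∧ ∀ l ∈ L, (S (g l)).Adj u l

/-- The collection `S` contains a rainbow `K_{1,Δ}`. -/
def HasRainbowStar {V : Type} {Δ t : ℕ} (S : Fin t → StarGraph V Δ) : Prop :=
  ∃ (u : V) (L : Finset V), L.card = Δ ∧ IsRainbowStarAt S u L


/-- The number of stars of the collection `S` with center `u` (this is `|𝒮_u|`). -/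
noncomputable def centerCount {V : Type} {Δ t : ℕ} (S : Fin t → StarGraph V Δ) (u : V) : ℕ :=
  {i : Fin t | (S i).center = u}.ncard

/-- The in-degree `d⁻(u)`: the number of vertices `x ≠ u` such that `u` is a leaf of
some star of the collection with center `x`. -/
noncomputable def inDeg {V : Type} {Δ t : ℕ} (S : Fin t → StarGraph V Δ) (u : V) : ℕ :=
  {x : V | x ≠ u ∧ ∃ i, (S i).center = x ∧ u ∈ (S i).leaves}.ncard

/-- The set of vertices that are centers of at least one star of the collection. -/
def centers {V : Type} {Δ t : ℕ} (S : Fin t → StarGraph V Δ) : Set V :=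
  {u : V | ∃ i, (S i).center = u}

/-!
Rainbow-freeness forces `|𝒮_u| + d⁻(u) ≤ Δ - 1` at every vertex `u`: otherwise the in-neighbours
of `u`, each through a star centered there, together with fresh leaves chosen greedily from the
stars centered at `u`, form a rainbow `K_{1,Δ}`. Summing over `V`, with `∑ |𝒮_u| = t` and
`∑ d⁻(u) ≥ Δ |C|` (every center has at least `Δ` out-neighbours), gives `t + Δ |C| ≤ n (Δ - 1)`;
summing `|𝒮_u| ≤ Δ - 1` over `C` alone gives `t ≤ (Δ - 1) |C|`. For the given `n` and `t` these
two bounds leave only `|C| = a (Δ - 1) + k₁ + 1`.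
-/

open Finset
open scoped Classical

section

variable {V : Type} {Δ t : ℕ}

theorem StarGraph.Adj.ne {S : StarGraph V Δ} {x y : V} (h : S.Adj x y) : x ≠ y := by
  rintro rfl
  rcases h with ⟨rfl, hx⟩ | ⟨rfl, hx⟩ <;> exact S.center_not_mem hx

variable (S : Fin t → StarGraph V Δ)

noncomputable def starsAt (u : V) : Finset (Fin t) :=
  univ.filter fun i => (S i).center = u

noncomputable def inNbrs [Fintype V] (u : V) : Finset V :=
  univ.filter fun x => x ≠ u ∧ ∃ i, (S i).center = x ∧ u ∈ (S i).leaves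

noncomputable def outNbrs [Fintype V] (x : V) : Finset V :=
  univ.filter fun u => x ≠ u ∧ ∃ i, (S i).center = x ∧ u ∈ (S i).leaves

variable {S}

@[simp]
theorem mem_starsAt {u : V} {i : Fin t} : i ∈ starsAt S u ↔ (S i).center = u := by
  simp [starsAt]

@[simp]
theorem mem_inNbrs [Fintype V] {u x : V} :
    x ∈ inNbrs S u ↔ x ≠ u ∧ ∃ i, (S i).center = x ∧ u ∈ (S i).leaves := by
  simp [inNbrs]

@[simp]
theorem mem_outNbrs [Fintype V] {x u : V} :
    u ∈ outNbrs S x ↔ x ≠ u ∧ ∃ i, (S i).center = x ∧ u ∈ (S i).leaves := by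
  simp [outNbrs]

variable (S)

theorem centerCount_eq_card_starsAt (u : V) : centerCount S u = #(starsAt S u) := by
  rw [centerCount, starsAt, ← Set.ncard_coe_finset, coe_filter_univ]

theorem inDeg_eq_card_inNbrs [Fintype V] (u : V) : inDeg S u = #(inNbrs S u) := by
  rw [inDeg, inNbrs, ← Set.ncard_coe_finset, coe_filter_univ]

theorem centers_eq_coe_image [Fintype V] :
    centers S = ↑(univ.image fun i => (S i).center) := by
  ext u
  simp [centers]

/-- The last conjunct says that the stars centered at `u` used so far all lie in `I`, so any
further star centered at `u` is still free to supply a fresh leaf. -/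
theorem exists_partial_rainbow_star [Fintype V] [Nonempty (Fin t)] {u : V} {D : Finset V}
    (hD : D ⊆ inNbrs S u) {I : Finset (Fin t)} (hI : I ⊆ starsAt S u) (hcard : #D + #I ≤ Δ) :
    ∃ (L : Finset V) (g : V → Fin t), #L = #D + #I ∧ Set.InjOn g L ∧
      ∀ l ∈ L, (S (g l)).Adj u l ∧ ((S (g l)).center = u → g l ∈ I) := by
  induction I using Finset.induction_on with
  | empty =>
    have hwit (x : V) (hx : x ∈ D) : ∃ i, (S i).center = x ∧ u ∈ (S i).leaves :=
      (mem_inNbrs.1 (hD hx)).2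
    refine ⟨D, fun x => if hx : x ∈ D then (hwit x hx).choose else Classical.arbitrary _,
      by simp, ?_, ?_⟩
    · intro x hx y hy hxy
      simp only [mem_coe] at hx hy
      simp only [dif_pos hx, dif_pos hy] at hxy
      rw [← (hwit x hx).choose_spec.1, ← (hwit y hy).choose_spec.1, hxy]
    · intro x hx
      simp only [dif_pos hx]
      obtain ⟨hcen, hu⟩ := (hwit x hx).choose_spec
      exact ⟨Or.inr ⟨hcen.symm, hu⟩, fun h => absurd (hcen.symm.trans h) (mem_inNbrs.1 (hD hx)).1⟩
  | insert i I hi ih =>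
    have hiu : (S i).center = u := mem_starsAt.1 (hI (mem_insert_self i I))
    rw [card_insert_of_notMem hi] at hcard ⊢
    obtain ⟨L, g, hLcard, hinj, hadj⟩ := ih ((subset_insert i I).trans hI) (by omega)
    obtain ⟨v, hv, hvL⟩ : ∃ v ∈ (S i).leaves, v ∉ L :=
      exists_mem_notMem_of_card_lt_card (by rw [(S i).card_leaves]; omega)
    have hgi : ∀ l ∈ L, g l ≠ i := fun l hl hgl =>
      hi (hgl ▸ (hadj l hl).2 (hgl ▸ hiu))
    have hupd : ∀ l ∈ L, Function.update g v i l = g l := fun l hl =>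
      Function.update_of_ne (ne_of_mem_of_not_mem hl hvL) _ _
    refine ⟨insert v L, Function.update g v i, by rw [card_insert_of_notMem hvL, hLcard, add_assoc], ?_, ?_⟩
    · rw [coe_insert, Set.injOn_insert (by simpa using hvL)]
      refine ⟨hinj.congr fun l hl => (hupd l hl).symm, ?_⟩
      rintro ⟨l, hl, hgl⟩
      rw [Function.update_self, hupd l hl] at hgl
      exact hgi l hl hgl
    · intro l hl
      rcases mem_insert.1 hl with rfl | hl
      · rw [Function.update_self]
        exact ⟨Or.inl ⟨hiu.symm, hv⟩, fun _ => mem_insert_self i I⟩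
      · rw [hupd l hl]
        exact ⟨(hadj l hl).1, fun h => mem_insert_of_mem ((hadj l hl).2 h)⟩

theorem hasRainbowStar_of_le_centerCount_add_inDeg [Fintype V] (hΔ : 0 < Δ) {u : V}
    (h : Δ ≤ centerCount S u + inDeg S u) : HasRainbowStar S := by
  rw [centerCount_eq_card_starsAt, inDeg_eq_card_inNbrs] at h
  obtain ⟨D, hDsub, hD⟩ := exists_subset_card_eq (min_le_right Δ #(inNbrs S u))
  obtain ⟨I, hIsub, hI⟩ := exists_subset_card_eq (s := starsAt S u) (n := Δ - #D) (by omega)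
  have : Nonempty (Fin t) := by
    rcases D.eq_empty_or_nonempty with rfl | ⟨x, hx⟩
    · obtain ⟨i, -⟩ := card_pos.1 (by rw [card_empty] at hD hI; omega : 0 < #I)
      exact ⟨i⟩
    · exact ⟨(mem_inNbrs.1 (hDsub hx)).2.choose⟩
  obtain ⟨L, g, hL, hinj, hadj⟩ := exists_partial_rainbow_star S hDsub hIsub (by omega)
  exact ⟨u, L, by omega, fun hu => (hadj u hu).1.ne rfl, g, hinj, fun l hl => (hadj l hl).1⟩

theorem sum_centerCount [Fintype V] : ∑ u, centerCount S u = t := by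
  simp only [centerCount_eq_card_starsAt, starsAt]
  exact (card_eq_sum_card_fiberwise fun i _ => mem_univ _).symm.trans (card_fin t)

theorem sum_centerCount_centers [Fintype V] :
    ∑ u ∈ univ.image (fun i => (S i).center), centerCount S u = t := by
  simp only [centerCount_eq_card_starsAt, starsAt]
  rw [← card_eq_sum_card_image, card_univ, Fintype.card_fin]

theorem sum_inDeg_eq_sum_card_outNbrs [Fintype V] : ∑ u, inDeg S u = ∑ x, #(outNbrs S x) := by
  simp only [inDeg_eq_card_inNbrs, inNbrs, outNbrs, card_filter]
  exact sum_comm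

theorem le_card_outNbrs_of_mem_centers [Fintype V] {x : V} (hx : x ∈ centers S) :
    Δ ≤ #(outNbrs S x) := by
  obtain ⟨i, rfl⟩ := hx
  calc Δ = #(S i).leaves := (S i).card_leaves.symm
    _ ≤ _ := card_le_card fun u hu =>
      mem_outNbrs.2 ⟨fun h => (S i).center_not_mem (by rwa [h]), i, rfl, hu⟩

theorem mul_ncard_centers_le_sum_inDeg [Fintype V] :
    Δ * (centers S).ncard ≤ ∑ u, inDeg S u := by
  rw [sum_inDeg_eq_sum_card_outNbrs, centers_eq_coe_image, Set.ncard_coe_finset, mul_comm,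
    ← smul_eq_mul]
  calc _ ≤ ∑ x ∈ univ.image (fun i => (S i).center), #(outNbrs S x) :=
        card_nsmul_le_sum _ _ _ fun x hx =>
          le_card_outNbrs_of_mem_centers S (by rw [centers_eq_coe_image]; exact hx)
    _ ≤ ∑ x, #(outNbrs S x) := sum_le_sum_of_subset (subset_univ _)

section RainbowFree

variable [Fintype V] {S} (hfree : ¬ HasRainbowStar S) (hΔ : 0 < Δ)
include hfree hΔ

theorem centerCount_add_inDeg_lt (u : V) : centerCount S u + inDeg S u < Δ :=
  lt_of_not_ge fun h => hfree (hasRainbowStar_of_le_centerCount_add_inDeg S hΔ h)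

theorem card_add_mul_ncard_centers_le :
    t + Δ * (centers S).ncard ≤ Fintype.card V * (Δ - 1) :=
  calc t + Δ * (centers S).ncard ≤ ∑ u, centerCount S u + ∑ u, inDeg S u := by
        rw [sum_centerCount]
        exact Nat.add_le_add_left (mul_ncard_centers_le_sum_inDeg S) t
    _ = ∑ u, (centerCount S u + inDeg S u) := sum_add_distrib.symm
    _ ≤ Fintype.card V * (Δ - 1) := by
        rw [← smul_eq_mul, ← card_univ]
        exact sum_le_card_nsmul _ _ _ fun u _ =>
          Nat.le_sub_one_of_lt (centerCount_add_inDeg_lt hfree hΔ u)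

theorem card_le_mul_ncard_centers : t ≤ (Δ - 1) * (centers S).ncard :=
  calc t = ∑ u ∈ univ.image (fun i => (S i).center), centerCount S u :=
        (sum_centerCount_centers S).symm
    _ ≤ (Δ - 1) * (centers S).ncard := by
        rw [centers_eq_coe_image, Set.ncard_coe_finset, mul_comm, ← smul_eq_mul]
        exact sum_le_card_nsmul _ _ _ fun u _ => by
          have := centerCount_add_inDeg_lt hfree hΔ u
          omega

end RainbowFree

end

theorem centers_card_extremal_large_k2_general {V : Type} [Fintype V]
    (Δ n a b k₁ k₂ t : ℕ) (hΔ : 2 ≤ Δ)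
    (hcard : Fintype.card V = n)
    (hn : n = a * (2 * Δ - 1) + b)
    (hbk : b * (Δ - 1) = k₁ * (2 * Δ - 1) + k₂)
    (hk₂ : Δ < k₂)
    (S : Fin t → StarGraph V Δ) (hfree : ¬ HasRainbowStar S)
    (hsize : t = a * (Δ - 1) ^ 2 + k₁ * (Δ - 1) + k₂ - Δ) :
    (centers S).ncard = a * (Δ - 1) + k₁ + 1 := by
  have h₁ := card_add_mul_ncard_centers_le hfree (by omega : 0 < Δ)
  have h₂ := card_le_mul_ncard_centers hfree (by omega : 0 < Δ)
  rw [hcard] at h₁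
  generalize (centers S).ncard = m at h₁ h₂ ⊢
  obtain ⟨e, rfl⟩ : ∃ e, Δ = e + 1 := ⟨Δ - 1, by omega⟩
  have h2e : 2 * (e + 1) - 1 = 2 * e + 1 := by omega
  simp only [h2e, Nat.add_sub_cancel] at hn hbk hsize h₁ h₂ ⊢
  have ht : t + (e + 1) = a * e ^ 2 + k₁ * e + k₂ := by omega
  subst hn
  -- `n * e + (e + 1) = (t + (e + 1)) + (e + 1) * (a * e + k₁ + 1)`, and `t > e * (a * e + k₁)`
  -- because `k₂ > e + 1`
  have hupper : m ≤ a * e + k₁ + 1 := by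
    by_contra! h
    nlinarith
  have hlower : a * e + k₁ < m := by
    by_contra! h
    nlinarith
  omega

theorem centers_card_extremal_large_k2 {V : Type} [Fintype V]
    (Δ n a b k₁ k₂ t : ℕ) (hΔ : 2 ≤ Δ)
    (hcard : Fintype.card V = n)
    (hn : n = a * (2 * Δ - 1) + b) (ha : 1 ≤ a) (hb : b ≤ 2 * Δ - 2)
    (hbk : b * (Δ - 1) = k₁ * (2 * Δ - 1) + k₂)
    (hk₂ : Δ < k₂) (hk₂' : k₂ ≤ 2 * Δ - 2)
    (S : Fin t → StarGraph V Δ) (hfree : ¬ HasRainbowStar S)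
    (hsize : t = a * (Δ - 1) ^ 2 + k₁ * (Δ - 1) + k₂ - Δ) :
    (centers S).ncard = a * (Δ - 1) + k₁ + 1 :=
  centers_card_extremal_large_k2_general Δ n a b k₁ k₂ t hΔ hcard hn hbk hk₂ S hfree hsize
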